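/- arXiv:1407.0679 — 2 statements merged into one kernel-verified Lean document; each statement's English description precedes it below -/
import Mathlib

section
/- Harnack inequality for Poisson integrals on the upper half-plane: for every finite Borel measure η on ℝ with Poisson integral h, and all z, w in the upper half-plane H, one has h(z) ≤ exp(ρ(z,w)) · h(w), where ρ is the hyperbolic distance on H. -/
/-!
Writing `P(z, x) = -Im (1 / (z - x))`, the identity `1/(w - x) - 1/(z - x) = (z - w)/((z - x)(w - x))`
gives `(P(z,x) - P(w,x))² ≤ |z - w|² / (Im z · Im w) · P(z,x) P(w,x) = (2 cosh ρ(z,w) - 2) P(z,x) P(w,x)`.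
Hence the ratio `r = P(z,x) / P(w,x)` satisfies `r + 1/r ≤ 2 cosh ρ`, i.e. `r ≤ exp ρ`;
integrating this pointwise Harnack inequality against `η` gives the theorem.
-/

open MeasureTheory

/-- The Poisson kernel of the upper half-plane. -/
noncomputable def poissonKernelUHP (z : ℂ) (x : ℝ) : ℝ :=
  z.im / ((z.re - x) ^ 2 + z.im ^ 2)

/-- The Poisson integral of a measure on `ℝ`. -/
noncomputable def poissonIntegral (η : Measure ℝ) (z : ℂ) : ℝ :=
  ∫ x, poissonKernelUHP z x ∂η

open Real

theorem le_exp_mul_of_sq_add_sq_le_two_cosh_mul {a b t : ℝ} (hb : 0 ≤ b) (ht : 0 ≤ t)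
    (h : a ^ 2 + b ^ 2 ≤ 2 * cosh t * a * b) : a ≤ exp t * b := by
  -- `exp t` and `exp (-t)` are the roots of `r ^ 2 - 2 * cosh t * r + 1`.
  have hroots : (a - exp t * b) * (a - exp (-t) * b) ≤ 0 := by
    have hprod : exp t * exp (-t) = 1 := by rw [← exp_add, add_neg_cancel, exp_zero]
    rw [cosh_eq] at h
    nlinarith
  by_contra! hlt
  have : exp (-t) * b ≤ exp t * b := by gcongr; linarith
  nlinarith

section PoissonKernel

variable (z w : ℂ) (x : ℝ)

theorem poissonKernelUHP_eq_im_div_norm_sq : poissonKernelUHP z x = z.im / ‖z - x‖ ^ 2 := by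
  simp only [poissonKernelUHP, Complex.sq_norm, Complex.normSq_apply, Complex.sub_re,
    Complex.ofReal_re, Complex.sub_im, Complex.ofReal_im, sub_zero]
  ring

theorem poissonKernelUHP_eq_neg_im_inv : poissonKernelUHP z x = -(z - x)⁻¹.im := by
  simp [poissonKernelUHP_eq_im_div_norm_sq, Complex.inv_im, Complex.sq_norm, neg_div]

variable {z w}

theorem sub_ofReal_ne_zero_of_im_ne_zero (hz : z.im ≠ 0) : z - x ≠ 0 := by
  intro h
  exact hz (by simpa using congrArg Complex.im h)

theorem abs_poissonKernelUHP_sub_le (hz : z.im ≠ 0) (hw : w.im ≠ 0) :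
    |poissonKernelUHP z x - poissonKernelUHP w x| ≤ dist z w / (‖z - x‖ * ‖w - x‖) := by
  have hsub : (w - x)⁻¹ - (z - x)⁻¹ = (z - w) / ((z - x) * (w - x)) := by
    rw [inv_sub_inv (sub_ofReal_ne_zero_of_im_ne_zero x hw) (sub_ofReal_ne_zero_of_im_ne_zero x hz)]
    ring
  calc |poissonKernelUHP z x - poissonKernelUHP w x|
      = |((w - x)⁻¹ - (z - x)⁻¹).im| := by
        rw [poissonKernelUHP_eq_neg_im_inv, poissonKernelUHP_eq_neg_im_inv, Complex.sub_im]
        ring_nf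
    _ ≤ ‖(w - x)⁻¹ - (z - x)⁻¹‖ := Complex.abs_im_le_norm _
    _ = dist z w / (‖z - x‖ * ‖w - x‖) := by rw [hsub, norm_div, norm_mul, dist_eq_norm]

theorem poissonKernelUHP_nonneg (hz : 0 ≤ z.im) : 0 ≤ poissonKernelUHP z x := by
  unfold poissonKernelUHP; positivity

theorem poissonKernelUHP_le_inv_im (hz : 0 < z.im) : poissonKernelUHP z x ≤ z.im⁻¹ :=
  calc poissonKernelUHP z x ≤ z.im / z.im ^ 2 := by
        unfold poissonKernelUHP
        gcongr
        exact le_add_of_nonneg_left (sq_nonneg _)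
    _ = z.im⁻¹ := by field_simp

theorem continuous_poissonKernelUHP (hz : 0 < z.im) : Continuous (poissonKernelUHP z) :=
  continuous_const.div (by fun_prop) fun x => by positivity

theorem integrable_poissonKernelUHP (η : Measure ℝ) [IsFiniteMeasure η] (hz : 0 < z.im) :
    Integrable (poissonKernelUHP z) η :=
  .of_bound (continuous_poissonKernelUHP hz).aestronglyMeasurable z.im⁻¹ <| ae_of_all _ fun x => by
    rw [Real.norm_of_nonneg (poissonKernelUHP_nonneg x hz.le)]
    exact poissonKernelUHP_le_inv_im x hz

end PoissonKernel

open UpperHalfPlane in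
theorem poissonKernelUHP_le_exp_dist_mul (z w : ℍ) (x : ℝ) :
    poissonKernelUHP z x ≤ exp (dist z w) * poissonKernelUHP w x := by
  set P := poissonKernelUHP z x
  set Q := poissonKernelUHP w x
  have hz : 0 < ‖(z : ℂ) - x‖ := norm_pos_iff.2 (sub_ofReal_ne_zero_of_im_ne_zero x z.im_pos.ne')
  have hw : 0 < ‖(w : ℂ) - x‖ := norm_pos_iff.2 (sub_ofReal_ne_zero_of_im_ne_zero x w.im_pos.ne')
  have hdiff : (P - Q) ^ 2 ≤ (dist (z : ℂ) w / (‖(z : ℂ) - x‖ * ‖(w : ℂ) - x‖)) ^ 2 := by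
    rw [← sq_abs]
    exact pow_le_pow_left₀ (abs_nonneg _)
      (abs_poissonKernelUHP_sub_le x z.im_pos.ne' w.im_pos.ne') 2
  have hprod : P * Q = z.im * w.im / (‖(z : ℂ) - x‖ * ‖(w : ℂ) - x‖) ^ 2 := by
    simp only [P, Q, poissonKernelUHP_eq_im_div_norm_sq, coe_im]
    ring
  refine le_exp_mul_of_sq_add_sq_le_two_cosh_mul (poissonKernelUHP_nonneg x w.im_pos.le)
    dist_nonneg ?_
  calc P ^ 2 + Q ^ 2 = (P - Q) ^ 2 + 2 * (P * Q) := by ring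
    _ ≤ (dist (z : ℂ) w / (‖(z : ℂ) - x‖ * ‖(w : ℂ) - x‖)) ^ 2 + 2 * (P * Q) := by gcongr
    _ = 2 * cosh (dist z w) * P * Q := by
        rw [cosh_dist, mul_assoc _ P, hprod]
        field_simp
        ring

theorem poisson_integral_harnack
    (η : Measure ℝ) [IsFiniteMeasure η] (z w : UpperHalfPlane) :
    poissonIntegral η (z : ℂ) ≤ Real.exp (dist z w) * poissonIntegral η (w : ℂ) := by
  rw [poissonIntegral, poissonIntegral, ← integral_const_mul]
  exact integral_mono (integrable_poissonKernelUHP η z.im_pos)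
    ((integrable_poissonKernelUHP η w.im_pos).const_mul _) (poissonKernelUHP_le_exp_dist_mul z w)
end

section
/- Poisson integrals of singular measures blow up nontangentially almost everywhere for the singular measure: let η_s be a finite Borel measure on ℝ singular with respect to Lebesgue measure and let h(z) = ∫_ℝ P(z,x) dη_s(x). Then for η_s-almost every x₀ ∈ ℝ and every aperture c > 0, h(z) → ∞ as z → x₀ with z in the cone Γ_c(x₀). -/
open MeasureTheory Filter Topology

/-- The Poisson kernel of the upper half-plane. -/
noncomputable def upperHalfPlanePoissonKernel (z : ℂ) (x : ℝ) : ℝ :=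
  z.im / ((z.re - x) ^ 2 + z.im ^ 2)

/-- The nontangential cone of aperture `c` at `x₀`. -/
def cone (x₀ c : ℝ) : Set ℂ :=
  {z : ℂ | 0 < z.im ∧ |z.re - x₀| ≤ c * z.im}

/-!
Since `η_s ⟂ volume`, differentiation of measures (Besicovitch) gives, for `η_s`-a.e. `x₀`,
`η_s [x₀ - r, x₀ + r] / r → ∞` as `r → 0⁺`. For `z` in the cone `Γ_c(x₀)` and `x` within `Im z`
of `x₀` we have `|Re z - x| ≤ (c + 1) Im z`, so the Poisson kernel is at least
`1 / (((c + 1)² + 1) Im z)` there; hence the Poisson integral at `z` dominates a constant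
multiple of `η_s [x₀ - Im z, x₀ + Im z] / Im z`, and `Im z → 0⁺` as `z → x₀` inside the cone.
-/

open Metric

theorem MeasureTheory.Measure.MutuallySingular.ae_tendsto_measure_closedBall_div_top
    {β : Type*} [MetricSpace β] [MeasurableSpace β] [BorelSpace β] [SecondCountableTopology β]
    [HasBesicovitchCovering β] {ρ μ : Measure β} [IsFiniteMeasure ρ]
    [IsLocallyFiniteMeasure μ] [μ.IsOpenPosMeasure] (h : ρ ⟂ₘ μ) :
    ∀ᵐ x ∂ρ, Tendsto (fun r => ρ (closedBall x r) / μ (closedBall x r)) (𝓝[>] 0) (𝓝 ⊤) := by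
  filter_upwards [Besicovitch.ae_tendsto_rnDeriv μ ρ, h.symm.rnDeriv_ae_eq_zero] with x hx hx0
  rw [hx0, Pi.zero_apply] at hx
  have hinv := tendsto_inv_iff.2 hx
  rw [ENNReal.inv_zero] at hinv
  refine hinv.congr' ?_
  filter_upwards [self_mem_nhdsWithin] with r (hr : 0 < r)
  exact ENNReal.inv_div (.inl (measure_ne_top ρ _)) (.inr (measure_closedBall_pos μ x hr).ne')

theorem MeasureTheory.Measure.MutuallySingular.ae_tendsto_measureReal_closedBall_div_atTop
    {ρ : Measure ℝ} [IsFiniteMeasure ρ] (h : ρ ⟂ₘ volume) :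
    ∀ᵐ x ∂ρ, Tendsto (fun r => ρ.real (closedBall x r) / r) (𝓝[>] 0) atTop := by
  filter_upwards [h.ae_tendsto_measure_closedBall_div_top] with x hx
  have hx' : Tendsto (fun r => ρ.real (closedBall x r) / (2 * r)) (𝓝[>] 0) atTop := by
    refine ENNReal.tendsto_ofReal_nhds_top.1 (hx.congr' ?_)
    filter_upwards [self_mem_nhdsWithin] with r (hr : 0 < r)
    rw [ENNReal.ofReal_div_of_pos (by positivity), Real.volume_closedBall, measureReal_def,
      ENNReal.ofReal_toReal (measure_ne_top ρ _)]
  refine (hx'.const_mul_atTop two_pos).congr' ?_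
  filter_upwards [self_mem_nhdsWithin] with r (hr : 0 < r)
  field_simp

theorem tendsto_im_nhdsWithin_cone (x₀ c : ℝ) :
    Tendsto Complex.im (𝓝[cone x₀ c] (x₀ : ℂ)) (𝓝[>] 0) :=
  tendsto_nhdsWithin_iff.2
    ⟨tendsto_nhdsWithin_of_tendsto_nhds (by simpa using Complex.continuous_im.tendsto (x₀ : ℂ)),
      eventually_nhdsWithin_of_forall fun _ hz => hz.1⟩

section PoissonKernel

variable {z : ℂ} {x : ℝ}

lemma upperHalfPlanePoissonKernel_nonneg (hz : 0 ≤ z.im) (x : ℝ) :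
    0 ≤ upperHalfPlanePoissonKernel z x :=
  div_nonneg hz (by positivity)

lemma upperHalfPlanePoissonKernel_le_inv_im (hz : 0 < z.im) (x : ℝ) :
    upperHalfPlanePoissonKernel z x ≤ z.im⁻¹ := by
  rw [upperHalfPlanePoissonKernel, div_le_iff₀ (by positivity)]
  field_simp
  nlinarith [sq_nonneg (z.re - x)]

lemma inv_le_upperHalfPlanePoissonKernel {a : ℝ} (hz : 0 < z.im) (hx : |z.re - x| ≤ a * z.im) :
    ((a ^ 2 + 1) * z.im)⁻¹ ≤ upperHalfPlanePoissonKernel z x := by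
  have hsq : (z.re - x) ^ 2 ≤ (a * z.im) ^ 2 := by
    simpa only [sq_abs] using pow_le_pow_left₀ (abs_nonneg _) hx 2
  calc ((a ^ 2 + 1) * z.im)⁻¹ = z.im / ((a * z.im) ^ 2 + z.im ^ 2) := by field_simp
    _ ≤ upperHalfPlanePoissonKernel z x := by
      unfold upperHalfPlanePoissonKernel
      gcongr

lemma continuous_upperHalfPlanePoissonKernel (hz : z.im ≠ 0) :
    Continuous (upperHalfPlanePoissonKernel z) :=
  continuous_const.div (by fun_prop) fun _ => by positivity

lemma integrable_upperHalfPlanePoissonKernel (μ : Measure ℝ) [IsFiniteMeasure μ]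
    (hz : 0 < z.im) : Integrable (upperHalfPlanePoissonKernel z) μ :=
  (integrable_const z.im⁻¹).mono'
    (continuous_upperHalfPlanePoissonKernel hz.ne').aestronglyMeasurable (.of_forall fun x => by
      rw [Real.norm_of_nonneg (upperHalfPlanePoissonKernel_nonneg hz.le x)]
      exact upperHalfPlanePoissonKernel_le_inv_im hz x)

end PoissonKernel

lemma measureReal_closedBall_div_le_integral_upperHalfPlanePoissonKernel (μ : Measure ℝ)
    [IsFiniteMeasure μ] {x₀ c : ℝ} {z : ℂ} (hz : z ∈ cone x₀ c) :
    ((c + 1) ^ 2 + 1)⁻¹ * (μ.real (closedBall x₀ z.im) / z.im) ≤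
      ∫ x, upperHalfPlanePoissonKernel z x ∂μ := by
  obtain ⟨him, hcone⟩ := hz
  have hball : ∀ x ∈ closedBall x₀ z.im,
      ((c + 1) ^ 2 + 1)⁻¹ * z.im⁻¹ ≤ upperHalfPlanePoissonKernel z x := by
    intro x hx
    rw [← mul_inv]
    refine inv_le_upperHalfPlanePoissonKernel him ?_
    calc |z.re - x| ≤ |z.re - x₀| + |x₀ - x| := abs_sub_le _ _ _
      _ ≤ c * z.im + z.im := add_le_add hcone (Real.dist_eq x₀ x ▸ mem_closedBall'.1 hx)
      _ = (c + 1) * z.im := by ring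
  have hint := integrable_upperHalfPlanePoissonKernel μ him
  calc ((c + 1) ^ 2 + 1)⁻¹ * (μ.real (closedBall x₀ z.im) / z.im)
      = ((c + 1) ^ 2 + 1)⁻¹ * z.im⁻¹ * μ.real (closedBall x₀ z.im) := by ring
    _ ≤ ∫ x in closedBall x₀ z.im, upperHalfPlanePoissonKernel z x ∂μ :=
      setIntegral_ge_of_const_le_real measurableSet_closedBall (measure_ne_top μ _) hball
        hint.integrableOn
    _ ≤ ∫ x, upperHalfPlanePoissonKernel z x ∂μ :=
      setIntegral_le_integral hint (.of_forall (upperHalfPlanePoissonKernel_nonneg him.le))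

theorem singular_poisson_integral_blows_up
    (η_s : Measure ℝ) [IsFiniteMeasure η_s]
    (hsing : η_s.MutuallySingular MeasureTheory.volume) :
    ∀ᵐ x₀ : ℝ ∂η_s, ∀ c > (0 : ℝ),
      Tendsto (fun z : ℂ => ∫ x, upperHalfPlanePoissonKernel z x ∂η_s)
        (𝓝[cone x₀ c] (x₀ : ℂ)) atTop := by
  filter_upwards [hsing.ae_tendsto_measureReal_closedBall_div_atTop] with x₀ hx₀ c _
  have hratio := (hx₀.comp (tendsto_im_nhdsWithin_cone x₀ c)).const_mul_atTop
    (by positivity : (0 : ℝ) < ((c + 1) ^ 2 + 1)⁻¹)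
  refine tendsto_atTop_mono' _ ?_ hratio
  filter_upwards [self_mem_nhdsWithin] with z hz
  exact measureReal_closedBall_div_le_integral_upperHalfPlanePoissonKernel η_s hz
end
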